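/- Let ρ ≥ 2 and p_1,…,p_ρ ≥ 1 with total dimension p = Σ_i p_i. Then the block-diagonal fourth moment m₄ = (1/4) Σ_i (p_i⁴ + 2p_i³ + 5p_i² + 4p_i) + (1/2) Σ_{i≠j} (p_i² + p_i)(p_j² + p_j) is strictly less than the full-matrix GOE fourth moment (p⁴ + 2p³ + 5p² + 4p)/4 of a single p×p GOE block. -/
import Mathlib


open Finset

set_option maxHeartbeats 1000000

private lemma sum_offdiag_eq {n : ℕ} (g : Fin n → ℝ) :
    ∑ i, ∑ j, (if i ≠ j then g i * g j else 0)
      = (∑ i, g i) ^ 2 - ∑ i, (g i) ^ 2 := by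
  have h : ∀ i : Fin n, ∑ j, (if i ≠ j then g i * g j else 0)
      = g i * (∑ j, g j) - g i * g i := by
    intro i
    have : ∑ j, (if i ≠ j then g i * g j else 0)
        = ∑ j, (g i * g j - if i = j then g i * g j else 0) := by
      apply Finset.sum_congr rfl
      intro j _
      by_cases hij : i = j <;> simp [hij]
    rw [this, Finset.sum_sub_distrib, ← Finset.mul_sum, Finset.sum_ite_eq]
    simp
  rw [Finset.sum_congr rfl (fun i _ => h i), Finset.sum_sub_distrib, ← Finset.sum_mul]
  ring_nf

/-- For `ρ ≥ 2` blocks of sizes `pᵢ ≥ 1` with total dimension `p = Σᵢ pᵢ`,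
the block-diagonal GOE fourth moment
`m₄ = (1/4) Σᵢ (pᵢ⁴ + 2pᵢ³ + 5pᵢ² + 4pᵢ) + (1/2) Σ_{i ≠ j} (pᵢ² + pᵢ)(pⱼ² + pⱼ)`
(ordered pairs `i ≠ j`) is strictly smaller than the full-matrix GOE fourth moment
`(p⁴ + 2p³ + 5p² + 4p)/4`. -/
theorem blkdiag_fourth_moment_lt_full (ρ : ℕ) (hρ : 2 ≤ ρ) (pdim : Fin ρ → ℕ)
    (hpdim : ∀ i, 1 ≤ pdim i) (p : ℕ) (hp : p = ∑ i, pdim i) :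
    (1 / 4) * ∑ i, ((pdim i : ℝ) ^ 4 + 2 * (pdim i) ^ 3 + 5 * (pdim i) ^ 2 + 4 * pdim i)
      + (1 / 2) * ∑ i, ∑ j, (if i ≠ j then
          ((pdim i : ℝ) ^ 2 + pdim i) * ((pdim j : ℝ) ^ 2 + pdim j) else 0)
    < ((p : ℝ) ^ 4 + 2 * p ^ 3 + 5 * p ^ 2 + 4 * p) / 4 := by
  classical
  have : Nontrivial (Fin ρ) := Fin.nontrivial_iff_two_le.mpr hρ
  set f : Fin ρ → ℝ := fun i => (pdim i : ℝ) with hfdef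
  have hf1 : ∀ i, (1:ℝ) ≤ f i := fun i => by simp only [hfdef]; exact_mod_cast hpdim i
  have hf0 : ∀ i, (0:ℝ) ≤ f i := fun i => le_trans zero_le_one (hf1 i)
  set P : ℝ := ∑ i, f i with hPdef
  have hP : (p:ℝ) = P := by rw [hp]; push_cast; rfl
  -- pair sums: for i ≠ j, f i + f j ≤ P
  have hpair : ∀ i j : Fin ρ, i ≠ j → f i + f j ≤ P := by
    intro i j hij
    have hsub : ({i, j} : Finset (Fin ρ)) ⊆ Finset.univ := Finset.subset_univ _
    have := Finset.sum_le_sum_of_subset_of_nonneg hsub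
      (fun k _ _ => hf0 k)
    rwa [Finset.sum_pair hij] at this
  -- each f i + 1 ≤ P
  have hfle : ∀ i, f i + 1 ≤ P := by
    intro i
    obtain ⟨j, hj⟩ := exists_ne i
    have := hpair i j (Ne.symm hj)
    linarith [hf1 j]
  have hP2 : (2:ℝ) ≤ P := by
    have i0 : Fin ρ := ⟨0, by omega⟩
    linarith [hfle i0, hf1 i0]
  set q : Fin ρ → ℝ := fun i => f i ^ 2 + f i with hqdef
  set S : ℝ := ∑ i, q i with hSdef
  set T : ℝ := ∑ i, (q i) ^ 2 with hTdef
  have hS0 : 0 ≤ S := Finset.sum_nonneg fun i _ => by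
    have := hf0 i; simp only [hqdef]; positivity
  -- first sum equals T + 4 S
  have hfirst : ∑ i, ((pdim i : ℝ) ^ 4 + 2 * (pdim i) ^ 3 + 5 * (pdim i) ^ 2 + 4 * pdim i)
      = T + 4 * S := by
    rw [hTdef, hSdef, Finset.mul_sum, ← Finset.sum_add_distrib]
    apply Finset.sum_congr rfl
    intro i _
    simp only [hqdef, hfdef]
    ring
  -- the double sum equals S^2 - T
  have hsecond : ∑ i, ∑ j, (if i ≠ j then
        ((pdim i : ℝ) ^ 2 + pdim i) * ((pdim j : ℝ) ^ 2 + pdim j) else 0)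
      = S ^ 2 - T := by
    have := sum_offdiag_eq q
    simpa [hqdef, hfdef, hSdef, hTdef] using this
  -- off-diagonal sum for f
  set D : ℝ := P ^ 2 - ∑ i, (f i) ^ 2 with hDdef
  have hDoff : ∑ i, ∑ j, (if i ≠ j then f i * f j else 0) = D := by
    rw [hDdef, ← sum_offdiag_eq f]
  -- D > 0
  have hDpos : 0 < D := by
    have hsum : ∑ i, (f i) ^ 2 ≤ ∑ i, f i * (P - 1) := by
      apply Finset.sum_le_sum
      intro i _
      have := hfle i
      have := hf0 i
      nlinarith
    rw [← Finset.sum_mul] at hsum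
    have : ∑ i, (f i) ^ 2 ≤ P * (P - 1) := hsum
    rw [hDdef]
    nlinarith
  -- D = Q - S where Q = P^2 + P
  have hQS : (P ^ 2 + P) - S = D := by
    have : S = (∑ i, (f i) ^ 2) + P := by
      rw [hSdef, hPdef, ← Finset.sum_add_distrib]
    rw [this, hDdef]; ring
  -- cross bound: S^2 - T ≤ (P^2/4 + P + 1) * D
  have hcross : S ^ 2 - T ≤ (P ^ 2 / 4 + P + 1) * D := by
    rw [← hsecond, ← hDoff]
    have hqle : ∀ i j : Fin ρ, i ≠ j →
        q i * q j ≤ (P ^ 2 / 4 + P + 1) * (f i * f j) := by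
      intro i j hij
      have h1 := hf1 i
      have h2 := hf1 j
      have h3 := hpair i j hij
      simp only [hqdef]
      have hab : (f i + 1) * (f j + 1) ≤ P ^ 2 / 4 + P + 1 := by
        nlinarith [sq_nonneg (f i - f j)]
      have hprod : 0 ≤ f i * f j := mul_nonneg (hf0 i) (hf0 j)
      nlinarith [mul_le_mul_of_nonneg_left hab hprod]
    calc ∑ i, ∑ j, (if i ≠ j then
          ((pdim i : ℝ) ^ 2 + pdim i) * ((pdim j : ℝ) ^ 2 + pdim j) else 0)
        ≤ ∑ i, ∑ j, (if i ≠ j then (P ^ 2 / 4 + P + 1) * (f i * f j) else 0) := by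
          apply Finset.sum_le_sum; intro i _
          apply Finset.sum_le_sum; intro j _
          by_cases hij : i = j
          · simp [hij]
          · simp only [hij, ne_eq, not_false_eq_true, if_true]
            exact hqle i j hij
      _ = (P ^ 2 / 4 + P + 1) * ∑ i, ∑ j, (if i ≠ j then f i * f j else 0) := by
          rw [Finset.mul_sum]
          apply Finset.sum_congr rfl; intro i _
          rw [Finset.mul_sum]
          apply Finset.sum_congr rfl; intro j _
          by_cases hij : i = j <;> simp [hij]
  -- strict bound
  have hstrict : S ^ 2 - T < ((P ^ 2 + P) - S) * ((P ^ 2 + P) + S + 4) := by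
    have hC : P ^ 2 / 4 + P + 1 < (P ^ 2 + P) + S + 4 := by nlinarith
    have h2 : S ^ 2 - T < ((P ^ 2 + P) + S + 4) * D :=
      lt_of_le_of_lt hcross (mul_lt_mul_of_pos_right hC hDpos)
    rw [← hQS] at h2
    linarith [h2, mul_comm ((P ^ 2 + P) + S + 4) ((P ^ 2 + P) - S)]
  have hexp : ((P ^ 2 + P) - S) * ((P ^ 2 + P) + S + 4)
      = P ^ 4 + 2 * P ^ 3 + 5 * P ^ 2 + 4 * P - S ^ 2 - 4 * S := by ring
  rw [hexp] at hstrict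
  rw [hfirst, hsecond, hP]
  linarith [hstrict]
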